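/- Let g be a Lie algebra over a field k and suppose there exists a wide homomorphism r : g → n_n(k) with n ≥ 2. Then g^{(n−1)} strictly contains g^{(n)}; in particular g^{(n−1)} ≠ 0. (This expresses the paper's inequality w ≤ d between the width and the nilpotent depth of g.) -/

import Mathlib

/-!
Call a matrix `s`-banded if `A i j = 0` whenever `j ≤ i + s`. Strictly upper triangular
matrices are `0`-banded, and the product of an `a`-banded and a `b`-banded matrix is
`(a + b + 1)`-banded, its entries on the next diagonal being single terms of the product sum.
So `r` maps `g^{(s+1)}` to `s`-banded matrices and, for `z ∈ g^{(s+1)}` and `j = i + s + 2`,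
`r⁅x, z⁆_{i,j} = λ_{i,i+1}(x) r(z)_{i+1,j} - r(z)_{i,j-1} λ_{j-1,j}(x)`. If this vanishes for
all `x` while `r(z)_{i+1,j} ≠ 0`, then `λ_{i,i+1}` and `λ_{j-1,j}` are dependent. By induction
on `s`, wideness therefore gives elements of `g^{(s+1)}` with a nonzero entry at any position on
the `(s+1)`-st superdiagonal; for `s = n - 2` this is the corner `(1, n)`, whereas `g^{(n)}`
maps to `0`.
-/

attribute [local instance 100] LieRing.ofAssociativeRing

open LieModule

namespace Matrix

variable (R : Type*) [CommRing R] (n : ℕ)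

def upperBand (s : ℕ) : Submodule R (Matrix (Fin n) (Fin n) R) where
  carrier := {A | ∀ i j : Fin n, (j : ℕ) ≤ i + s → A i j = 0}
  add_mem' hA hB i j hij := by simp [hA i j hij, hB i j hij]
  zero_mem' _ _ _ := rfl
  smul_mem' c A hA i j hij := by simp [hA i j hij]

variable {R n}

variable {a b : ℕ} {A B : Matrix (Fin n) (Fin n) R}

theorem mul_mem_upperBand (hA : A ∈ upperBand R n a) (hB : B ∈ upperBand R n b) :
    A * B ∈ upperBand R n (a + b + 1) := by
  intro i j hij
  refine (mul_apply ..).trans (Finset.sum_eq_zero fun l _ => ?_)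
  rcases le_or_gt (l : ℕ) (i + a) with hl | hl
  · rw [hA i l hl, zero_mul]
  · rw [hB l j (by omega), mul_zero]

theorem lie_mem_upperBand (hA : A ∈ upperBand R n a) (hB : B ∈ upperBand R n b) :
    ⁅A, B⁆ ∈ upperBand R n (a + b + 1) := by
  have hBA := mul_mem_upperBand hB hA
  rw [add_comm b a] at hBA
  rw [Ring.lie_def]
  exact sub_mem (mul_mem_upperBand hA hB) hBA

theorem eq_zero_of_mem_upperBand {s : ℕ} (hs : n ≤ s + 1) (hA : A ∈ upperBand R n s) :
    A = 0 :=
  ext fun i j => hA i j (by omega)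

theorem mul_apply_of_mem_upperBand (hA : A ∈ upperBand R n a) (hB : B ∈ upperBand R n b)
    {i l j : Fin n} (hl : (l : ℕ) = i + a + 1) (hj : (j : ℕ) = l + b + 1) :
    (A * B) i j = A i l * B l j := by
  refine (mul_apply ..).trans
    (Finset.sum_eq_single l (fun m _ hm => ?_) fun hl => absurd (Finset.mem_univ l) hl)
  rcases le_or_gt (m : ℕ) (i + a) with h | h
  · rw [hA i m h, zero_mul]
  · rw [hB m j (by have := Fin.val_ne_of_ne hm; omega), mul_zero]

theorem lie_apply_of_mem_upperBand {s : ℕ} {X Z : Matrix (Fin n) (Fin n) R}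
    (hX : X ∈ upperBand R n 0) (hZ : Z ∈ upperBand R n s) {i l m j : Fin n}
    (hl : (l : ℕ) = i + 1) (hm : (m : ℕ) = i + s + 1) (hj : (j : ℕ) = i + s + 2) :
    ⁅X, Z⁆ i j = X i l * Z l j - Z i m * X m j := by
  rw [Ring.lie_def, sub_apply, mul_apply_of_mem_upperBand hX hZ (by omega) (by omega),
    mul_apply_of_mem_upperBand hZ hX hm (by omega)]

end Matrix

open Matrix

section

variable {R L : Type*} [CommRing R] [LieRing L] [LieAlgebra R L] {n : ℕ}
  {r : L →ₗ⁅R⁆ Matrix (Fin n) (Fin n) R}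

theorem apply_mem_upperBand_of_mem_lowerCentralSeries (hband : ∀ v, r v ∈ upperBand R n 0)
    {s : ℕ} {z : L} (hz : z ∈ lowerCentralSeries R L L s) : r z ∈ upperBand R n s := by
  induction s generalizing z with
  | zero => exact hband z
  | succ s ih =>
    rw [lowerCentralSeries_succ, ← LieSubmodule.mem_toSubmodule,
      LieSubmodule.lieIdeal_oper_eq_linear_span'] at hz
    refine (Submodule.span_le (p := (upperBand R n (s + 1)).comap (r : L →ₗ[R] _))).mpr ?_ hz
    rintro _ ⟨x, -, w, hw, rfl⟩
    simpa using lie_mem_upperBand (hband x) (ih hw)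

theorem exists_mem_lowerCentralSeries_apply_ne_zero (hband : ∀ v, r v ∈ upperBand R n 0)
    (hflag : ∀ i j : Fin n, (j : ℕ) = i + 1 → ∃ v, r v i j ≠ 0)
    (hwide : ∀ i j i' j' : Fin n, (j : ℕ) = i + 1 → (j' : ℕ) = i' + 1 → i ≠ i' →
      ∀ a b : R, (∀ v, a * r v i j + b * r v i' j' = 0) → a = 0 ∧ b = 0)
    (s : ℕ) : ∀ i j : Fin n, (j : ℕ) = i + s + 1 →
      ∃ z ∈ lowerCentralSeries R L L s, r z i j ≠ 0 := by
  induction s with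
  | zero =>
    intro i j hij
    obtain ⟨v, hv⟩ := hflag i j hij
    exact ⟨v, LieSubmodule.mem_top v, hv⟩
  | succ s ih =>
    intro i j hij
    let l : Fin n := ⟨i + 1, by omega⟩
    let m : Fin n := ⟨i + s + 1, by omega⟩
    obtain ⟨z, hz, hzlj⟩ := ih l j (show (j : ℕ) = i + 1 + s + 1 by omega)
    by_contra! hbracket
    have hdependent : ∀ x, r z l j * r x i l + -r z i m * r x m j = 0 := fun x => by
      have hzero := hbracket ⁅x, z⁆ (by
        rw [lowerCentralSeries_succ]
        exact LieSubmodule.lie_mem_lie (LieSubmodule.mem_top x) hz)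
      rw [LieHom.map_lie, lie_apply_of_mem_upperBand (hband x)
        (apply_mem_upperBand_of_mem_lowerCentralSeries hband hz) (l := l) (m := m) rfl rfl
        (by omega)] at hzero
      linear_combination hzero
    exact hzlj (hwide i l m j rfl (show (j : ℕ) = i + s + 1 + 1 by omega)
      (Fin.ne_of_val_ne (show (i : ℕ) ≠ i + s + 1 by omega)) _ _ hdependent).1

end

-- `lowerCentralSeries k g g s` is the paper's `g^{(s+1)}`.
/-- If a Lie algebra `g` over a field `k` admits a wide homomorphism
`r : g → n_n(k)` with `n ≥ 2`, then `g^{(n-1)}` strictly contains `g^{(n)}`; in particular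
`g^{(n-1)} ≠ 0`.  (Note Mathlib's `lowerCentralSeries ⋯ 0 = g = g^{(1)}`, so `g^{(s)}` is
`lowerCentralSeries ⋯ (s-1)`; the conclusion reads
`lowerCentralSeries (n-1) < lowerCentralSeries (n-2)` and `lowerCentralSeries (n-2) ≠ ⊥`.) -/
theorem stmt_9 {k : Type*} [Field k] {g : Type*} [LieRing g] [LieAlgebra k g] {n : ℕ}
    (hn : 2 ≤ n)
    (r : g →ₗ⁅k⁆ Matrix (Fin n) (Fin n) k)
    (hr : ∀ (v : g) (i j : Fin n), j ≤ i → r v i j = 0)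
    (hflag : ∀ (i : ℕ) (hi : i + 1 < n), ∃ v : g, r v ⟨i, by omega⟩ ⟨i + 1, hi⟩ ≠ 0)
    (hwide : ∀ (i j : ℕ) (hi : i + 1 < n) (hj : j + 1 < n), i ≠ j →
      ∀ a b : k,
        (∀ v : g,
          a * r v ⟨i, by omega⟩ ⟨i + 1, hi⟩ + b * r v ⟨j, by omega⟩ ⟨j + 1, hj⟩ = 0) →
        a = 0 ∧ b = 0) :
    LieModule.lowerCentralSeries k g g (n - 1) < LieModule.lowerCentralSeries k g g (n - 2) ∧
      LieModule.lowerCentralSeries k g g (n - 2) ≠ ⊥ := by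
  have hband : ∀ v, r v ∈ upperBand k n 0 := fun v i j hij => hr v i j (by simpa using hij)
  obtain ⟨z, hz, hz0⟩ := exists_mem_lowerCentralSeries_apply_ne_zero hband
    (fun i j hj => by
      have hi : (i : ℕ) + 1 < n := hj ▸ j.isLt
      obtain rfl : j = ⟨i + 1, hi⟩ := Fin.ext hj
      exact hflag i (by omega))
    (fun i j i' j' hj hj' hii' a b h => by
      have hi : (i : ℕ) + 1 < n := hj ▸ j.isLt
      have hi' : (i' : ℕ) + 1 < n := hj' ▸ j'.isLt
      obtain rfl : j = ⟨i + 1, hi⟩ := Fin.ext hj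
      obtain rfl : j' = ⟨i' + 1, hi'⟩ := Fin.ext hj'
      exact hwide i i' (by omega) (by omega) (Fin.val_ne_of_ne hii') a b h)
    (n - 2) ⟨0, by omega⟩ ⟨n - 1, by omega⟩ (show n - 1 = 0 + (n - 2) + 1 by omega)
  have hz_not_mem : z ∉ lowerCentralSeries k g g (n - 1) := fun hmem =>
    hz0 (by rw [eq_zero_of_mem_upperBand (by omega)
      (apply_mem_upperBand_of_mem_lowerCentralSeries hband hmem)]; rfl)
  refine ⟨lt_of_le_of_ne (antitone_lowerCentralSeries k g g (by omega)) fun h => ?_,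
    fun h => ?_⟩
  · exact hz_not_mem (h ▸ hz)
  · exact hz_not_mem (by rw [h, LieSubmodule.mem_bot] at hz; exact hz ▸ zero_mem _)
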